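/- arXiv:2210.16424 — 2 statements merged into one kernel-verified Lean document; each statement's English description precedes it below -/
import Mathlib

section
/- Potential lower bound: let X be a set of n distinct points in ℝ^d, let K ≥ 1, fix C* and a* as in the optimal-clustering setup, and let x_i ∈ X with optimal cluster P = P_{x_i} and c* = a*(x_i). Then for every nonempty finite C ⊆ ℝ^d with |C| ≤ K, letting a_C(y) denote a nearest point of C to y, φ(X;C) ≥ (1/5)·( Σ_{y∈P} ‖y − c*‖² + Σ_{y∈X, y≠x_i} ‖a_C(y) − a*(y)‖² ). -/
open scoped BigOperators Classical

noncomputable section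

abbrev Pt (d : ℕ) := EuclideanSpace ℝ (Fin d)

variable {d : ℕ}

/-- Distance from a point to a finite set of centroids (`0` if the set is empty). -/
def dSet (x : Pt d) (C : Finset (Pt d)) : ℝ :=
  if h : C.Nonempty then C.inf' h fun c => dist x c else 0

/-- `K`-means cost of a multiset of points w.r.t. a finite centroid set. -/
def kcost (X : Multiset (Pt d)) (C : Finset (Pt d)) : ℝ :=
  (X.map fun x => dSet x C ^ 2).sum

/-- Optimal `K`-means objective. -/
def optCost (K : ℕ) (X : Multiset (Pt d)) : ℝ :=
  sInf {v | ∃ C : Finset (Pt d), C.Nonempty ∧ C.card ≤ K ∧ v = kcost X C}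

/-- Set of entries of the tuple `c` with index `< j`. -/
def prefSet {K : ℕ} (c : Fin K → Pt d) (j : Fin K) : Finset (Pt d) :=
  (Finset.univ.filter fun i => i < j).image c

/-- Probability of picking `c j` as the `j`-th centroid in K-means++ initialization on `X`,
given that the previous centroids are the entries of `c` with index `< j`. -/
def stepProb (X : Multiset (Pt d)) {K : ℕ} (c : Fin K → Pt d) (j : Fin K) : ℝ :=
  if (j : ℕ) = 0 then (X.count (c j) : ℝ) / (Multiset.card X : ℝ)
  else (X.count (c j) : ℝ) * dSet (c j) (prefSet c j) ^ 2 / kcost X (prefSet c j)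

/-- PMF of K-means++ initialization with parameter `K` on the multiset `X`,
as a function on `K`-tuples of points. -/
def kmppProb (X : Multiset (Pt d)) {K : ℕ} (c : Fin K → Pt d) : ℝ :=
  ∏ j : Fin K, stepProb X c j

/-- Tuples with all entries in the finite set `X`. -/
def tupleSupp (X : Finset (Pt d)) (K : ℕ) : Finset (Fin K → Pt d) :=
  Fintype.piFinset fun _ => X

/-- The nearest centroid among the entries of `c` to `x`, ties broken by smallest index
(junk value `x` when `K = 0`). -/
def assignPt {K : ℕ} (c : Fin K → Pt d) (x : Pt d) : Pt d :=
  if h : (Finset.univ.filter fun j : Fin K => ∀ i, dist x (c j) ≤ dist x (c i)).Nonempty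
  then c ((Finset.univ.filter fun j : Fin K => ∀ i, dist x (c j) ≤ dist x (c i)).min' h)
  else x

/-! The cluster of `x_i` costs at most `φ(X;C*) = φ*_K(X) ≤ φ(X;C)`. For every `y`, the triangle
inequality through `y` gives `‖a_C(y) − a*(y)‖² ≤ 2 (d(y,C)² + d(y,C*)²)`, so the second sum is
at most `2 φ(X;C) + 2 φ(X;C*) ≤ 4 φ(X;C)`. -/

lemma dist_sq_le_two_mul_add_sq {α : Type*} [PseudoMetricSpace α] (a b y : α) :
    dist a b ^ 2 ≤ 2 * (dist y a ^ 2 + dist y b ^ 2) :=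
  calc dist a b ^ 2 ≤ (dist y a + dist y b) ^ 2 :=
        pow_le_pow_left₀ dist_nonneg (dist_triangle_left a b y) 2
    _ ≤ 2 * (dist y a ^ 2 + dist y b ^ 2) := add_sq_le

lemma kcost_nonneg (X : Multiset (Pt d)) (D : Finset (Pt d)) : 0 ≤ kcost X D :=
  Multiset.sum_nonneg fun _ hv => by
    obtain ⟨y, -, rfl⟩ := Multiset.mem_map.1 hv
    positivity

lemma optCost_le_kcost {K : ℕ} (X : Multiset (Pt d)) {D : Finset (Pt d)}
    (hD : D.Nonempty) (hDK : D.card ≤ K) : optCost K X ≤ kcost X D :=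
  csInf_le ⟨0, fun _ ⟨D', _, _, hv⟩ => hv ▸ kcost_nonneg X D'⟩ ⟨D, hD, hDK, rfl⟩

lemma sum_dSet_sq_le_kcost {X S : Finset (Pt d)} (hS : S ⊆ X) (D : Finset (Pt d)) :
    ∑ y ∈ S, dSet y D ^ 2 ≤ kcost X.val D :=
  Finset.sum_le_sum_of_subset_of_nonneg hS fun _ _ _ => sq_nonneg _

lemma sum_dist_assign_sq_le {X S D D' : Finset (Pt d)} (hS : S ⊆ X) {a a' : Pt d → Pt d}
    (ha : ∀ y ∈ X, dist y (a y) = dSet y D) (ha' : ∀ y ∈ X, dist y (a' y) = dSet y D') :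
    ∑ y ∈ S, dist (a y) (a' y) ^ 2 ≤ 2 * (kcost X.val D + kcost X.val D') :=
  calc ∑ y ∈ S, dist (a y) (a' y) ^ 2
      ≤ ∑ y ∈ S, 2 * (dSet y D ^ 2 + dSet y D' ^ 2) :=
        Finset.sum_le_sum fun y hy => by
          simpa only [ha y (hS hy), ha' y (hS hy)] using dist_sq_le_two_mul_add_sq (a y) (a' y) y
    _ = 2 * (∑ y ∈ S, dSet y D ^ 2 + ∑ y ∈ S, dSet y D' ^ 2) := by
        rw [← Finset.mul_sum, Finset.sum_add_distrib]
    _ ≤ 2 * (kcost X.val D + kcost X.val D') := by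
        gcongr <;> exact sum_dSet_sq_le_kcost hS _

theorem potential_lower_bound_general {d K : ℕ}
    (X : Finset (Pt d))
    (Cstar : Finset (Pt d))
    (hCopt : kcost X.val Cstar = optCost K X.val)
    (astar : Pt d → Pt d)
    (hastar : ∀ y ∈ X, astar y ∈ Cstar ∧ dist y (astar y) = dSet y Cstar)
    (xi : Pt d)
    (C : Finset (Pt d)) (hC : C.Nonempty) (hCK : C.card ≤ K)
    (aC : Pt d → Pt d)
    (haC : ∀ y ∈ X, aC y ∈ C ∧ dist y (aC y) = dSet y C) :
    kcost X.val C ≥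
      (1 / 5) * ((∑ y ∈ X.filter (fun y => astar y = astar xi), dist y (astar xi) ^ 2) +
        ∑ y ∈ X.erase xi, dist (aC y) (astar y) ^ 2) := by
  have hopt : kcost X.val Cstar ≤ kcost X.val C := hCopt ▸ optCost_le_kcost X.val hC hCK
  have hcluster : ∑ y ∈ X.filter (fun y => astar y = astar xi), dist y (astar xi) ^ 2
      ≤ kcost X.val Cstar :=
    calc _ = ∑ y ∈ X.filter (fun y => astar y = astar xi), dSet y Cstar ^ 2 :=
          Finset.sum_congr rfl fun y hy => by
            obtain ⟨hyX, hy⟩ := Finset.mem_filter.1 hy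
            rw [← hy, (hastar y hyX).2]
      _ ≤ kcost X.val Cstar := sum_dSet_sq_le_kcost (Finset.filter_subset _ X) Cstar
  have hassign := sum_dist_assign_sq_le (Finset.erase_subset xi X)
    (fun y hy => (haC y hy).2) (fun y hy => (hastar y hy).2)
  linarith

/-- potential lower bound.  For `x_i ∈ X` with optimal cluster `P` and
`c* = a*(x_i)`, and any nonempty finite `C` with `|C| ≤ K`,
`φ(X;C) ≥ (1/5)(Σ_{y∈P} ‖y − c*‖² + Σ_{y∈X, y≠x_i} ‖a_C(y) − a*(y)‖²)`,
where `a_C(y)` is a nearest point of `C` to `y`. -/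
theorem potential_lower_bound {d K : ℕ} (hK : 1 ≤ K)
    (X : Finset (Pt d))
    (Cstar : Finset (Pt d)) (hCne : Cstar.Nonempty) (hCcard : Cstar.card ≤ K)
    (hCopt : kcost X.val Cstar = optCost K X.val)
    (astar : Pt d → Pt d)
    (hastar : ∀ y ∈ X, astar y ∈ Cstar ∧ dist y (astar y) = dSet y Cstar)
    (xi : Pt d) (hxi : xi ∈ X)
    (C : Finset (Pt d)) (hC : C.Nonempty) (hCK : C.card ≤ K)
    (aC : Pt d → Pt d)
    (haC : ∀ y ∈ X, aC y ∈ C ∧ dist y (aC y) = dSet y C) :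
    kcost X.val C ≥
      (1 / 5) * ((∑ y ∈ X.filter (fun y => astar y = astar xi), dist y (astar xi) ^ 2) +
        ∑ y ∈ X.erase xi, dist (aC y) (astar y) ^ 2) :=
  potential_lower_bound_general X Cstar hCopt astar hastar xi C hC hCK aC haC
end
end

section
/- Single-client federated unlearning is exact: consider the quantized federated pipeline in which, additionally, each client l forms the count vector q^(l) indexed by quantization bins (q^(l)_j equals the number of points of X^(l) whose nearest local centroid is quantized into bin j), q = Σ_l q^(l), and the server's output C_s is sampled from the distribution determined by q alone (K-means++ initialization with parameter K, followed by a cost-non-increasing refinement, on the multiset of bin centers with multiplicities q). Upon a removal request X_R ⊆ X^(l) with |X^(l) ∖ X_R| ≥ K, client l applies Algorithm 3 to its K-tuple and recomputes its count vector from the resulting K-tuple and X^(l) ∖ X_R, the other clients are unchanged, and the server resamples C_s from the distribution determined by the new aggregate q'. Then the joint distribution of (C^(1),…,C^(L), C_s) after this unlearning procedure equals the joint distribution obtained by running the pipeline from scratch on the dataset in which X^(l) is replaced by X^(l) ∖ X_R. -/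
open scoped BigOperators Classical

noncomputable section

variable {d : ℕ}

/-- Transition probability of Algorithm 3 (unlearning for K-means++ initialization):
given the trained tuple `C` on the original set, `unlearnProb X' XR C C'` is the
probability that the procedure outputs `C'`, where `X'` is the retained set and `XR` the
removal set.  If no entry of `C` lies in `XR` the output is `C` itself; otherwise the
prefix of `C` before the first entry in `XR` is kept and the remaining centroids are
resampled by continuing K-means++ sampling on `X'`. -/
def unlearnProb (X' XR : Finset (Pt d)) {K : ℕ} (C C' : Fin K → Pt d) : ℝ :=
  if h : (Finset.univ.filter fun j : Fin K => C j ∈ XR).Nonempty then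
    if ∀ j < (Finset.univ.filter fun j : Fin K => C j ∈ XR).min' h, C' j = C j then
      ∏ j ∈ Finset.univ.filter
          (fun j : Fin K => (Finset.univ.filter fun j' : Fin K => C j' ∈ XR).min' h ≤ j),
        stepProb X'.val C' j
    else 0
  else if C' = C then 1 else 0

/-- Uniform quantizer with step `γ`: each coordinate is sent to the center of its bin. -/
def quant {d : ℕ} (γ : ℝ) (y : Pt d) : Pt d :=
  WithLp.toLp 2 fun i => γ * ((⌊y i / γ⌋ : ℤ) + 1 / 2)

/-- The multiset of quantized assigned local centroids, with multiplicities: this carries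
exactly the information of the aggregated count vector `q = Σ_l q^(l)` over the
quantization bins. -/
def qMS {L K : ℕ} (γ : ℝ) (Xc : Fin L → Finset (Pt d)) (cc : Fin L → Fin K → Pt d) :
    Multiset (Pt d) :=
  ∑ l : Fin L, (Xc l).val.map fun x => quant γ (assignPt (cc l) x)

/-! Only client `l0`'s tuple changes, and the server only sees the new aggregate, so it suffices
that Algorithm 3 maps the K-means++ law on `X` to the K-means++ law on `X' = X ∖ XR`. Fix a target
`c'` avoiding `XR` and let `A t` be its probability when the first `t` centroids are drawn on `X`
and the others on `X'`. Runs that never meet `XR` contribute `A K`. Runs that first meet `XR` at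
step `m` contribute (prefix of `c'` on `X`) · (chance of hitting `XR` at step `m`) · (suffix on
`X'`); since the K-means++ weights on `X` are those on `X'` plus those on `XR`, this is
`A m - A (m + 1)`, and the sum telescopes to `A 0`, the probability of `c'` on `X'`. -/

section Weights

variable {K : ℕ}

open Finset

lemma dSet_pos {x : Pt d} {C : Finset (Pt d)} (hC : C.Nonempty) (hx : x ∉ C) :
    0 < dSet x C := by
  rw [dSet, dif_pos hC, Finset.lt_inf'_iff]
  exact fun c hc => dist_pos.mpr fun h => hx (h ▸ hc)

lemma prefSet_card_le (c : Fin K → Pt d) (j : Fin K) : (prefSet c j).card ≤ j :=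
  card_image_le.trans (by rw [filter_gt_eq_Iio, Fin.card_Iio])

lemma prefSet_nonempty (c : Fin K → Pt d) {j : Fin K} (hj : (j : ℕ) ≠ 0) :
    (prefSet c j).Nonempty :=
  ⟨c ⟨0, by omega⟩, mem_image.mpr ⟨⟨0, by omega⟩,
    by simp only [mem_filter, mem_univ, true_and, Fin.lt_def]; omega, rfl⟩⟩

lemma prefSet_congr {c c' : Fin K → Pt d} {j : Fin K} (h : ∀ i < j, c i = c' i) :
    prefSet c j = prefSet c' j :=
  image_congr fun i hi => h i (mem_filter.mp hi).2

lemma stepProb_congr (X : Multiset (Pt d)) {c c' : Fin K → Pt d} {j : Fin K}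
    (h : ∀ i ≤ j, c i = c' i) : stepProb X c j = stepProb X c' j := by
  rw [stepProb, stepProb, h j le_rfl, prefSet_congr fun i hi => h i hi.le]

def stepWeight (c : Fin K → Pt d) (j : Fin K) (x : Pt d) : ℝ :=
  if (j : ℕ) = 0 then 1 else dSet x (prefSet c j) ^ 2

lemma stepWeight_nonneg (c : Fin K → Pt d) (j : Fin K) (x : Pt d) : 0 ≤ stepWeight c j x := by
  unfold stepWeight; split_ifs <;> positivity

lemma stepWeight_pos {c : Fin K → Pt d} {j : Fin K} {x : Pt d} (hx : x ∉ prefSet c j) :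
    0 < stepWeight c j x := by
  unfold stepWeight
  split_ifs with hj
  · exact one_pos
  · exact pow_pos (dSet_pos (prefSet_nonempty c hj) hx) 2

lemma sum_stepWeight_pos {X : Finset (Pt d)} (hK : K ≤ X.card) (c : Fin K → Pt d) (j : Fin K) :
    0 < ∑ x ∈ X, stepWeight c j x := by
  obtain ⟨x, hxX, hxc⟩ := exists_mem_notMem_of_card_lt_card
    ((prefSet_card_le c j).trans_lt (j.isLt.trans_le hK))
  exact sum_pos' (fun y _ => stepWeight_nonneg c j y) ⟨x, hxX, stepWeight_pos hxc⟩

lemma stepWeight_update_self (c : Fin K → Pt d) (j : Fin K) (y : Pt d) :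
    stepWeight (Function.update c j y) j = stepWeight c j := by
  unfold stepWeight
  rw [prefSet_congr fun i hi => Function.update_of_ne hi.ne _ _]

lemma stepProb_eq_div (X : Finset (Pt d)) (c : Fin K → Pt d) (j : Fin K) :
    stepProb X.val c j
      = (if c j ∈ X then stepWeight c j (c j) else 0) / ∑ x ∈ X, stepWeight c j x := by
  rw [stepProb, Multiset.count_eq_of_nodup X.nodup]
  by_cases hj : (j : ℕ) = 0 <;> simp [stepWeight, hj, kcost, apply_ite]

lemma stepProb_eq_zero {X : Finset (Pt d)} {c : Fin K → Pt d} {j : Fin K} (hj : c j ∉ X) :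
    stepProb X.val c j = 0 := by
  rw [stepProb_eq_div, if_neg hj, zero_div]

lemma kmppProb_eq_zero {X : Finset (Pt d)} {c : Fin K → Pt d} {j : Fin K} (hj : c j ∉ X) :
    kmppProb X.val c = 0 :=
  prod_eq_zero (mem_univ j) (stepProb_eq_zero hj)

lemma sum_stepProb_update {X S : Finset (Pt d)} (hS : S ⊆ X) (c : Fin K → Pt d) (j : Fin K) :
    ∑ y ∈ S, stepProb X.val (Function.update c j y) j
      = (∑ y ∈ S, stepWeight c j y) / ∑ x ∈ X, stepWeight c j x := by
  simp_rw [stepProb_eq_div, stepWeight_update_self, Function.update_self, ← sum_div]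
  exact congrArg (· / _) (sum_congr rfl fun y hy => if_pos (hS hy))

lemma sum_stepProb_update_self {X : Finset (Pt d)} (hK : K ≤ X.card) (c : Fin K → Pt d)
    (j : Fin K) : ∑ y ∈ X, stepProb X.val (Function.update c j y) j = 1 := by
  rw [sum_stepProb_update subset_rfl, div_self (sum_stepWeight_pos hK c j).ne']

/-- The weights on `X` are those on `X ∖ XR` plus those on `XR`, and
`a / b * (r / (b + r)) = a / b - a / (b + r)`. -/
lemma stepProb_sdiff_mul_sum_stepProb_update {X XR : Finset (Pt d)} (hXR : XR ⊆ X)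
    (hK : K ≤ (X \ XR).card) (c : Fin K → Pt d) {j : Fin K} (hj : c j ∉ XR) :
    stepProb (X \ XR).val c j * ∑ y ∈ XR, stepProb X.val (Function.update c j y) j
      = stepProb (X \ XR).val c j - stepProb X.val c j := by
  have hsplit := (sum_sdiff hXR (f := stepWeight c j)).symm
  have hmem : c j ∈ X \ XR ↔ c j ∈ X := by simp [hj]
  have hpos := sum_stepWeight_pos hK c j
  have hnonneg : 0 ≤ ∑ y ∈ XR, stepWeight c j y := sum_nonneg fun y _ => stepWeight_nonneg c j y
  rw [sum_stepProb_update hXR, stepProb_eq_div, stepProb_eq_div, if_congr hmem rfl rfl, hsplit]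
  field_simp
  ring

end Weights

section PrefixMarginal

variable {K : ℕ}

open Finset

def prefixProb (X : Multiset (Pt d)) (c : Fin K → Pt d) (t : ℕ) : ℝ :=
  ∏ j ∈ univ.filter (fun j : Fin K => (j : ℕ) < t), stepProb X c j

def suffixProb (X : Multiset (Pt d)) (c : Fin K → Pt d) (t : ℕ) : ℝ :=
  ∏ j ∈ univ.filter (fun j : Fin K => t ≤ (j : ℕ)), stepProb X c j

variable (X : Multiset (Pt d)) (c : Fin K → Pt d)

@[simp] lemma prefixProb_zero : prefixProb X c 0 = 1 := by
  simp [prefixProb]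

@[simp] lemma prefixProb_card : prefixProb X c K = kmppProb X c := by
  simp [prefixProb, kmppProb]

@[simp] lemma suffixProb_zero : suffixProb X c 0 = kmppProb X c := by
  simp [suffixProb, kmppProb]

@[simp] lemma suffixProb_card : suffixProb X c K = 1 := by
  rw [suffixProb, filter_false_of_mem fun j _ => not_le.mpr j.isLt, prod_empty]

lemma prefixProb_succ (m : Fin K) :
    prefixProb X c (m + 1) = prefixProb X c m * stepProb X c m := by
  have : univ.filter (fun j : Fin K => (j : ℕ) < m + 1)
      = insert m (univ.filter fun j : Fin K => (j : ℕ) < m) := by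
    ext j; simp only [mem_filter, mem_univ, true_and, mem_insert, Fin.ext_iff]; omega
  rw [prefixProb, this, prod_insert (by simp), mul_comm, prefixProb]

lemma suffixProb_eq_mul_succ (m : Fin K) :
    suffixProb X c m = stepProb X c m * suffixProb X c (m + 1) := by
  have : univ.filter (fun j : Fin K => (m : ℕ) ≤ j)
      = insert m (univ.filter fun j : Fin K => (m : ℕ) + 1 ≤ j) := by
    ext j; simp only [mem_filter, mem_univ, true_and, mem_insert, Fin.ext_iff]; omega
  rw [suffixProb, this, prod_insert (by simp), suffixProb]

variable {X c}

lemma prefixProb_congr {w : Fin K → Pt d} {t : ℕ} (h : ∀ j : Fin K, (j : ℕ) < t → c j = w j) :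
    prefixProb X c t = prefixProb X w t :=
  prod_congr rfl fun _ hj =>
    stepProb_congr X fun i hi => h i (lt_of_le_of_lt hi (mem_filter.mp hj).2)

lemma suffixProb_eq_zero {X : Finset (Pt d)} {j : Fin K} {t : ℕ} (hj : c j ∉ X) (ht : t ≤ j) :
    suffixProb X.val c t = 0 :=
  prod_eq_zero (by simpa using ht) (stepProb_eq_zero hj)

lemma prefixProb_update_succ (m : Fin K) (y : Pt d) :
    prefixProb X (Function.update c m y) (m + 1)
      = prefixProb X c m * stepProb X (Function.update c m y) m := by
  rw [prefixProb_succ, prefixProb_congr fun j hj =>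
    Function.update_of_ne (Fin.ne_of_val_ne hj.ne) _ _]

lemma agreeBelow_succ_update_iff (m : Fin K) (w : Fin K → Pt d) (y : Pt d) :
    (∀ j : Fin K, (j : ℕ) < m + 1 → c j = Function.update w m y j)
      ↔ c m = y ∧ ∀ j : Fin K, (j : ℕ) < m → c j = w j := by
  refine ⟨fun h => ⟨by simpa using h m (by omega), fun j hj => ?_⟩, fun ⟨hm, h⟩ j hj => ?_⟩
  · simpa [Function.update_of_ne (Fin.ne_of_val_ne hj.ne)] using h j (by omega)
  · rcases Nat.lt_succ_iff_lt_or_eq.mp hj with hj | hj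
    · rw [Function.update_of_ne (Fin.ne_of_val_ne hj.ne), h j hj]
    · rw [Fin.ext hj, hm, Function.update_self]

lemma sum_filter_agreeBelow_mem (s : Finset (Fin K → Pt d)) (f : (Fin K → Pt d) → ℝ) (m : Fin K)
    (w : Fin K → Pt d) (S : Finset (Pt d)) :
    ∑ c ∈ s with (∀ j : Fin K, (j : ℕ) < m → c j = w j) ∧ c m ∈ S, f c
      = ∑ y ∈ S, ∑ c ∈ s with ∀ j : Fin K, (j : ℕ) < m + 1 → c j = Function.update w m y j,
          f c := by
  simp_rw [agreeBelow_succ_update_iff, sum_filter]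
  rw [sum_comm]
  refine sum_congr rfl fun c _ => ?_
  simp_rw [ite_and]
  rw [sum_ite_eq]
  by_cases h : c m ∈ S <;> simp [h]

lemma sum_kmppProb_agreeBelow {X : Finset (Pt d)} (hK : K ≤ X.card) {t : ℕ} (ht : t ≤ K)
    (w : Fin K → Pt d) :
    ∑ c ∈ tupleSupp X K with ∀ j : Fin K, (j : ℕ) < t → c j = w j, kmppProb X.val c
      = prefixProb X.val w t := by
  induction ht using Nat.decreasingInduction generalizing w with
  | self =>
    have hw : ∀ c : Fin K → Pt d, (∀ j : Fin K, (j : ℕ) < K → c j = w j) ↔ c = w :=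
      fun c => ⟨fun h => funext fun j => h j j.isLt, fun h j _ => h ▸ rfl⟩
    simp_rw [hw, sum_filter, sum_ite_eq', prefixProb_card]
    split_ifs with hmem
    · rfl
    · obtain ⟨j, hj⟩ : ∃ j, w j ∉ X := by simpa [tupleSupp, Fintype.mem_piFinset] using hmem
      exact (kmppProb_eq_zero hj).symm
  | of_succ t ht ih =>
    let m : Fin K := ⟨t, ht⟩
    calc ∑ c ∈ tupleSupp X K with ∀ j : Fin K, (j : ℕ) < t → c j = w j, kmppProb X.val c
        = ∑ c ∈ tupleSupp X K with (∀ j : Fin K, (j : ℕ) < m → c j = w j) ∧ c m ∈ X,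
            kmppProb X.val c :=
          sum_congr (filter_congr fun c hc =>
            (and_iff_left (Fintype.mem_piFinset.mp hc m)).symm) fun _ _ => rfl
      _ = ∑ y ∈ X, prefixProb X.val (Function.update w m y) (m + 1) := by
          rw [sum_filter_agreeBelow_mem]
          exact sum_congr rfl fun y _ => ih _
      _ = prefixProb X.val w t := by
          simp_rw [prefixProb_update_succ, ← mul_sum, sum_stepProb_update_self hK, mul_one]
          rfl

lemma sum_kmppProb_agreeBelow_mem {X : Finset (Pt d)} (hK : K ≤ X.card) (m : Fin K)
    (w : Fin K → Pt d) (S : Finset (Pt d)) :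
    ∑ c ∈ tupleSupp X K with (∀ j : Fin K, (j : ℕ) < m → c j = w j) ∧ c m ∈ S, kmppProb X.val c
      = prefixProb X.val w m * ∑ y ∈ S, stepProb X.val (Function.update w m y) m := by
  simp_rw [sum_filter_agreeBelow_mem, sum_kmppProb_agreeBelow hK m.isLt, prefixProb_update_succ,
    mul_sum]

end PrefixMarginal

section Unlearning

variable {K : ℕ} {X' XR : Finset (Pt d)}

open Finset

lemma unlearnProb_of_forall_notMem {C : Fin K → Pt d} (h : ∀ j, C j ∉ XR) (C' : Fin K → Pt d) :
    unlearnProb X' XR C C' = if C' = C then 1 else 0 := by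
  rw [unlearnProb, dif_neg]
  rintro ⟨j, hj⟩
  exact h j (mem_filter.mp hj).2

lemma unlearnProb_of_firstHit {C : Fin K → Pt d} {m : Fin K} (hm : C m ∈ XR)
    (hlt : ∀ j < m, C j ∉ XR) (C' : Fin K → Pt d) :
    unlearnProb X' XR C C' = if ∀ j < m, C' j = C j then suffixProb X'.val C' m else 0 := by
  have hne : (univ.filter fun j => C j ∈ XR).Nonempty := ⟨m, by simpa using hm⟩
  have hmin : (univ.filter fun j => C j ∈ XR).min' hne = m :=
    le_antisymm (min'_le _ _ (by simpa using hm))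
      (le_min' _ _ _ fun j hj => not_lt.mp fun hjm => hlt j hjm (mem_filter.mp hj).2)
  rw [unlearnProb, dif_pos hne, hmin]
  rfl

lemma unlearnProb_eq_zero_of_mem (hX' : Disjoint X' XR) {C' : Fin K → Pt d} {j : Fin K}
    (hj : C' j ∈ XR) (C : Fin K → Pt d) : unlearnProb X' XR C C' = 0 := by
  by_cases hit : ∃ i, C i ∈ XR
  · rw [unlearnProb_of_firstHit (Fin.find_spec hit) fun i => Fin.find_min hit]
    refine ite_eq_right_iff.mpr fun hagree =>
      suffixProb_eq_zero (hX'.notMem_of_mem_right_finset hj) ?_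
    exact not_lt.mp fun hjm => Fin.find_min hit hjm (hagree j hjm ▸ hj)
  · push Not at hit
    rw [unlearnProb_of_forall_notMem hit, if_neg]
    rintro rfl
    exact hit j hj

variable {X : Finset (Pt d)} {c' : Fin K → Pt d}

lemma sum_filter_find?_eq_none (hc' : ∀ j, c' j ∉ XR) :
    ∑ C ∈ tupleSupp X K with Fin.find? (fun j => decide (C j ∈ XR)) = none,
      kmppProb X.val C * unlearnProb X' XR C c' = kmppProb X.val c' := by
  have hterm : ∀ C : Fin K → Pt d,
      (if Fin.find? (fun j => decide (C j ∈ XR)) = none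
        then kmppProb X.val C * unlearnProb X' XR C c' else 0)
      = if c' = C then kmppProb X.val c' else 0 := by
    intro C
    by_cases hC : ∀ j, C j ∉ XR
    · rw [if_pos (by simpa using hC), unlearnProb_of_forall_notMem hC]
      split_ifs with h <;> simp [h]
    · rw [if_neg (by simpa using hC), if_neg]
      rintro rfl
      exact hC hc'
  rw [sum_filter, sum_congr rfl fun C _ => hterm C, sum_ite_eq]
  split_ifs with hmem
  · rfl
  · obtain ⟨j, hj⟩ : ∃ j, c' j ∉ X := by
      simpa [tupleSupp, Fintype.mem_piFinset, hc'] using hmem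
    exact (kmppProb_eq_zero hj).symm

lemma sum_filter_find?_eq_some (hK : K ≤ X.card) (hc' : ∀ j, c' j ∉ XR) (m : Fin K) :
    ∑ C ∈ tupleSupp X K with Fin.find? (fun j => decide (C j ∈ XR)) = some m,
      kmppProb X.val C * unlearnProb X' XR C c'
      = prefixProb X.val c' m * (∑ y ∈ XR, stepProb X.val (Function.update c' m y) m) *
          suffixProb X'.val c' m := by
  rw [← sum_kmppProb_agreeBelow_mem hK, sum_mul, sum_filter, sum_filter]
  refine sum_congr rfl fun C _ => ?_
  by_cases hfirst : C m ∈ XR ∧ ∀ j < m, C j ∉ XR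
  · have hagree : (∀ j : Fin K, (j : ℕ) < m → C j = c' j) ↔ ∀ j < m, c' j = C j :=
      forall_congr' fun j => by rw [eq_comm, Fin.lt_def]
    simp only [Fin.find?_eq_some_iff, decide_eq_true_eq, decide_eq_false_iff_not, hfirst.1,
      true_and, and_true, unlearnProb_of_firstHit hfirst.1 hfirst.2, hagree, mul_ite, mul_zero]
    exact if_pos hfirst.2
  · rw [if_neg, if_neg]
    · rintro ⟨hagree, hm⟩
      exact hfirst ⟨hm, fun j hj => hagree j hj ▸ hc' j⟩
    · simpa [Fin.find?_eq_some_iff] using hfirst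

theorem sum_kmppProb_mul_unlearnProb (hXR : XR ⊆ X) (hK : K ≤ (X \ XR).card)
    (c' : Fin K → Pt d) :
    ∑ C ∈ tupleSupp X K, kmppProb X.val C * unlearnProb (X \ XR) XR C c'
      = kmppProb (X \ XR).val c' := by
  by_cases hhit : ∃ j, c' j ∈ XR
  · obtain ⟨j, hj⟩ := hhit
    rw [kmppProb_eq_zero (j := j) fun h => (mem_sdiff.mp h).2 hj]
    exact sum_eq_zero fun C _ => by
      rw [unlearnProb_eq_zero_of_mem disjoint_sdiff_self_left hj, mul_zero]
  push Not at hhit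
  have hKX : K ≤ X.card := hK.trans (card_le_card sdiff_subset)
  set A : ℕ → ℝ := fun t => prefixProb X.val c' t * suffixProb (X \ XR).val c' t with hA
  have hstep (m : Fin K) :
      prefixProb X.val c' m * (∑ y ∈ XR, stepProb X.val (Function.update c' m y) m) *
        suffixProb (X \ XR).val c' m = A m - A (m + 1) := by
    simp only [hA]
    rw [suffixProb_eq_mul_succ, prefixProb_succ]
    linear_combination prefixProb X.val c' m * suffixProb (X \ XR).val c' (m + 1) *
      stepProb_sdiff_mul_sum_stepProb_update hXR hK c' (hhit m)
  rw [← sum_fiberwise (tupleSupp X K) fun C => Fin.find? fun j => decide (C j ∈ XR),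
    Fintype.sum_option, sum_filter_find?_eq_none hhit]
  simp_rw [sum_filter_find?_eq_some hKX hhit, hstep]
  rw [Fin.sum_univ_eq_sum_range (fun t => A t - A (t + 1)), sum_range_sub']
  simp [hA]

end Unlearning

theorem federated_unlearning_is_exact_general {d L K : ℕ}
    (γ : ℝ)
    (Xc : Fin L → Finset (Pt d))
    (l0 : Fin L) (XR : Finset (Pt d)) (hXR : XR ⊆ Xc l0)
    (hcard' : K ≤ (Xc l0 \ XR).card)
    (ν : Multiset (Pt d) → Finset (Pt d) → ℝ)
    (Xc' : Fin L → Finset (Pt d))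
    (hXc' : ∀ l, Xc' l = if l = l0 then Xc l0 \ XR else Xc l) :
    ∀ (cc : Fin L → Fin K → Pt d) (Cs : Finset (Pt d)),
      (∑ C0 ∈ tupleSupp (Xc l0) K,
          kmppProb (Xc l0).val C0 * unlearnProb (Xc l0 \ XR) XR C0 (cc l0)) *
          (∏ l ∈ Finset.univ.erase l0, kmppProb (Xc l).val (cc l)) *
          ν (qMS γ Xc' cc) Cs
        = (∏ l : Fin L, kmppProb (Xc' l).val (cc l)) * ν (qMS γ Xc' cc) Cs := by
  intro cc Cs
  rw [sum_kmppProb_mul_unlearnProb hXR hcard',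
    ← Finset.mul_prod_erase Finset.univ _ (Finset.mem_univ l0), hXc' l0, if_pos rfl]
  congr 2
  exact Finset.prod_congr rfl fun l hl => by rw [hXc' l, if_neg (Finset.ne_of_mem_erase hl)]

/-- single-client federated unlearning is exact.  Consider the
quantized federated pipeline in which the server's output `C_s` is sampled from a
distribution `ν` determined by the aggregated count vector `q` alone.  Upon a removal
request `X_R ⊆ X^(l0)`, client `l0` applies Algorithm 3 (with transition probabilities
`unlearnProb`), the other clients are unchanged, and the server resamples `C_s` from
`ν` at the new aggregate.  Then for every outcome `(cc, C_s)`, the joint probability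
after unlearning equals the joint probability of a fresh run of the pipeline on the
dataset in which `X^(l0)` is replaced by `X^(l0) ∖ X_R`. -/
theorem federated_unlearning_is_exact {d L K : ℕ} (hL : 1 ≤ L) (hK : 1 ≤ K)
    (γ : ℝ) (hγ : 0 < γ)
    (Xc : Fin L → Finset (Pt d))
    (hdisj : ∀ l l', l ≠ l' → Disjoint (Xc l) (Xc l'))
    (hcard : ∀ l, K ≤ (Xc l).card)
    (l0 : Fin L) (XR : Finset (Pt d)) (hXR : XR ⊆ Xc l0)
    (hcard' : K ≤ (Xc l0 \ XR).card)
    (ν : Multiset (Pt d) → Finset (Pt d) → ℝ)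
    (Xc' : Fin L → Finset (Pt d))
    (hXc' : ∀ l, Xc' l = if l = l0 then Xc l0 \ XR else Xc l) :
    ∀ (cc : Fin L → Fin K → Pt d) (Cs : Finset (Pt d)),
      (∑ C0 ∈ tupleSupp (Xc l0) K,
          kmppProb (Xc l0).val C0 * unlearnProb (Xc l0 \ XR) XR C0 (cc l0)) *
          (∏ l ∈ Finset.univ.erase l0, kmppProb (Xc l).val (cc l)) *
          ν (qMS γ Xc' cc) Cs
        = (∏ l : Fin L, kmppProb (Xc' l).val (cc l)) * ν (qMS γ Xc' cc) Cs :=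
  federated_unlearning_is_exact_general γ Xc l0 XR hXR hcard' ν Xc' hXc'
end
end
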